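/- arXiv:2511.00571 — 4 statements merged into one kernel-verified Lean document; each statement's English description precedes it below -/
import Mathlib

section
/- Let n ≥ 1, x ∈ EuclideanSpace ℝ (Fin n), and let q : EuclideanSpace ℝ (Fin n) → EuclideanSpace ℝ (Fin n) and θ : EuclideanSpace ℝ (Fin n) → ℝ be differentiable at x with θ(x) > 0. Let K be an n×n real positive semidefinite matrix and suppose q(x) = −K·∇θ(x) (Fourier's law evaluated at x). Let A be a finite index set and Φ : A → ℝ a family of channel powers with Φ_α ≥ 0 for all α, let r ≥ 0 be a heating rate, and let σ ∈ ℝ (the entropy rate ṡ at x) satisfy the entropy balance θ(x)·σ + div q(x) − ∑_{α∈A} Φ_α = r. Then σ + div(q/θ)(x) = (∇θ(x) ⬝ᵥ K·∇θ(x))/θ(x)² + (∑_{α∈A} Φ_α)/θ(x) + r/θ(x), and this quantity is nonnegative (the local entropy inequality / Clausius–Duhem inequality). -/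
open Matrix
open scoped RealInnerProductSpace

/-- Divergence of a vector field on `EuclideanSpace ℝ (Fin n)` at a point. -/
noncomputable def vdiv {n : ℕ}
    (v : EuclideanSpace ℝ (Fin n) → EuclideanSpace ℝ (Fin n))
    (x : EuclideanSpace ℝ (Fin n)) : ℝ :=
  ∑ i, fderiv ℝ v x (EuclideanSpace.single i (1 : ℝ)) i

/-!
By the product rule, `div (q/θ) = (div q)/θ - ⟪∇θ, q⟫/θ²`. The entropy balance turns `σ + (div q)/θ`
into `(∑ Φ + r)/θ`, and Fourier's law turns `-⟪∇θ, q⟫` into the quadratic form `∇θ ⬝ᵥ K ∇θ`,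
which is nonnegative since `K` is positive semidefinite.
-/

theorem HasGradientAt.inv {F : Type*} [NormedAddCommGroup F] [InnerProductSpace ℝ F]
    [CompleteSpace F] {f : F → ℝ} {f' x : F} (hf : HasGradientAt f f' x) (hfx : f x ≠ 0) :
    HasGradientAt (fun y => (f y)⁻¹) (-(f x ^ 2)⁻¹ • f') x := by
  rw [hasGradientAt_iff_hasFDerivAt] at hf ⊢
  refine ((hasDerivAt_inv hfx).comp_hasFDerivAt x hf).congr_fderiv ?_
  ext y
  simp

section Divergence

variable {n : ℕ} {x : EuclideanSpace ℝ (Fin n)}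

theorem vdiv_smul {f : EuclideanSpace ℝ (Fin n) → ℝ} {f' : EuclideanSpace ℝ (Fin n)}
    {v : EuclideanSpace ℝ (Fin n) → EuclideanSpace ℝ (Fin n)}
    (hf : HasGradientAt f f' x) (hv : DifferentiableAt ℝ v x) :
    vdiv (fun y => f y • v y) x = f x * vdiv v x + ⟪f', v x⟫ := by
  rw [hasGradientAt_iff_hasFDerivAt] at hf
  rw [vdiv, (hf.fun_smul hv.hasFDerivAt).fderiv]
  simp [vdiv, PiLp.inner_apply, Finset.sum_add_distrib, Finset.mul_sum, mul_comm]

theorem vdiv_inv_smul {θ : EuclideanSpace ℝ (Fin n) → ℝ}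
    {v : EuclideanSpace ℝ (Fin n) → EuclideanSpace ℝ (Fin n)}
    (hθ : DifferentiableAt ℝ θ x) (hθx : θ x ≠ 0) (hv : DifferentiableAt ℝ v x) :
    vdiv (fun y => (θ y)⁻¹ • v y) x = vdiv v x / θ x - ⟪gradient θ x, v x⟫ / θ x ^ 2 := by
  rw [vdiv_smul (hθ.hasGradientAt.inv hθx) hv, inner_smul_left]
  simp only [Real.ringHom_apply, inner_gradient_left, neg_mul]
  ring

end Divergence

theorem inner_eq_neg_dotProduct_mulVec {n : ℕ} {u v : EuclideanSpace ℝ (Fin n)}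
    {K : Matrix (Fin n) (Fin n) ℝ} (hv : ∀ i, v i = -(K *ᵥ (fun j => u j)) i) :
    ⟪u, v⟫ = -((fun j => u j) ⬝ᵥ K *ᵥ (fun j => u j)) := by
  simp [PiLp.inner_apply, dotProduct, hv, mul_comm]

theorem local_entropy_inequality_general {n : ℕ}
    (x : EuclideanSpace ℝ (Fin n))
    (q : EuclideanSpace ℝ (Fin n) → EuclideanSpace ℝ (Fin n))
    (θ : EuclideanSpace ℝ (Fin n) → ℝ)
    (hq : DifferentiableAt ℝ q x) (hθ : DifferentiableAt ℝ θ x)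
    (hθx : 0 < θ x)
    (K : Matrix (Fin n) (Fin n) ℝ) (hK : K.PosSemidef)
    (hFourier : ∀ i, q x i = -(K.mulVec (fun j => gradient θ x j)) i)
    {A : Type*} [Fintype A] (Φ : A → ℝ) (hΦ : ∀ α, 0 ≤ Φ α)
    (r : ℝ) (hr : 0 ≤ r) (σ : ℝ)
    (hbal : θ x * σ + vdiv q x - ∑ α, Φ α = r) :
    σ + vdiv (fun y => (1 / θ y) • q y) x =
      ((fun j => gradient θ x j) ⬝ᵥ K.mulVec (fun j => gradient θ x j)) / (θ x) ^ 2
        + (∑ α, Φ α) / θ x + r / θ x ∧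
    0 ≤ σ + vdiv (fun y => (1 / θ y) • q y) x := by
  have hdiv := vdiv_inv_smul hθ hθx.ne' hq
  rw [inner_eq_neg_dotProduct_mulVec hFourier] at hdiv
  have hdissipation : σ + vdiv (fun y => (1 / θ y) • q y) x =
      ((fun j => gradient θ x j) ⬝ᵥ K.mulVec (fun j => gradient θ x j)) / (θ x) ^ 2
        + (∑ α, Φ α) / θ x + r / θ x := by
    simp only [one_div, hdiv, ← hbal]
    field_simp
    ring
  refine ⟨hdissipation, hdissipation ▸ ?_⟩
  have hconduction := hK.dotProduct_mulVec_nonneg (fun j => gradient θ x j)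
  have hchannels : 0 ≤ ∑ α, Φ α := Finset.sum_nonneg fun α _ => hΦ α
  simp only [star_trivial] at hconduction
  positivity

/-- Local entropy inequality / Clausius–Duhem:
Given Fourier's law `q x = −K ∇θ(x)` with `K` positive semidefinite,
nonnegative channel powers `Φ`, nonnegative heating `r`, and the entropy
balance `θ x * σ + div q x − ∑ Φ = r`, one has
`σ + div (q/θ) x = (∇θ ⬝ᵥ K ∇θ)/θ² + (∑ Φ)/θ + r/θ ≥ 0`. -/
theorem local_entropy_inequality {n : ℕ} (hn : 1 ≤ n)
    (x : EuclideanSpace ℝ (Fin n))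
    (q : EuclideanSpace ℝ (Fin n) → EuclideanSpace ℝ (Fin n))
    (θ : EuclideanSpace ℝ (Fin n) → ℝ)
    (hq : DifferentiableAt ℝ q x) (hθ : DifferentiableAt ℝ θ x)
    (hθx : 0 < θ x)
    (K : Matrix (Fin n) (Fin n) ℝ) (hK : K.PosSemidef)
    (hFourier : ∀ i, q x i = -(K.mulVec (fun j => gradient θ x j)) i)
    {A : Type*} [Fintype A] (Φ : A → ℝ) (hΦ : ∀ α, 0 ≤ Φ α)
    (r : ℝ) (hr : 0 ≤ r) (σ : ℝ)
    (hbal : θ x * σ + vdiv q x - ∑ α, Φ α = r) :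
    σ + vdiv (fun y => (1 / θ y) • q y) x =
      ((fun j => gradient θ x j) ⬝ᵥ K.mulVec (fun j => gradient θ x j)) / (θ x) ^ 2
        + (∑ α, Φ α) / θ x + r / θ x ∧
    0 ≤ σ + vdiv (fun y => (1 / θ y) • q y) x :=
  local_entropy_inequality_general x q θ hq hθ hθx K hK hFourier Φ hΦ r hr σ hbal
end

section
/- Let E and F be real finite-dimensional inner product spaces and φ : E × ℝ × F → ℝ be differentiable. Let paths 𝐅 : ℝ → E, θ : ℝ → ℝ, ξ : ℝ → F be differentiable at t, define s(τ) := −(fderiv ℝ φ (𝐅(τ), θ(τ), ξ(τ))) (0, 1, 0) and e(τ) := φ(𝐅(τ), θ(τ), ξ(τ)) + θ(τ)·s(τ), and assume s is differentiable at t. Suppose additionally the local entropy balance θ(t)·s'(t) + D = Φ + r holds, where D ∈ ℝ represents the heat-flux divergence Div q₀ at the material point, Φ ∈ ℝ the total nonthermal channel power, and r ∈ ℝ the volumetric heating. Then the local first law holds: e'(t) = Dφ(p)(𝐅'(t), 0, 0) − D + r + Dφ(p)(0, 0, ξ'(t)) + Φ, where p = (𝐅(t), θ(t), ξ(t)). 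-/
/-- Local first law:
With entropy `s τ := −Dφ(𝓕 τ, θ τ, ξ τ)(0,1,0)` and internal energy
`e := φ + θ·s`, if the local entropy balance `θ(t)·s'(t) + D = Φ + r` holds
(`D` = heat-flux divergence, `Φ` = total nonthermal channel power,
`r` = volumetric heating), then
`e'(t) = Dφ(p)(𝓕'(t),0,0) − D + r + Dφ(p)(0,0,ξ'(t)) + Φ`. -/
theorem local_first_law
    {E F : Type*}
    [NormedAddCommGroup E] [InnerProductSpace ℝ E] [FiniteDimensional ℝ E]
    [NormedAddCommGroup F] [InnerProductSpace ℝ F] [FiniteDimensional ℝ F]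
    (φ : E × ℝ × F → ℝ) (hφ : Differentiable ℝ φ)
    (𝓕 : ℝ → E) (θ : ℝ → ℝ) (ξ : ℝ → F) (t : ℝ)
    (h𝓕 : DifferentiableAt ℝ 𝓕 t) (hθ : DifferentiableAt ℝ θ t)
    (hξ : DifferentiableAt ℝ ξ t)
    (s : ℝ → ℝ)
    (hs : s = fun τ => -(fderiv ℝ φ (𝓕 τ, θ τ, ξ τ)) (0, 1, 0))
    (hsdiff : DifferentiableAt ℝ s t)
    (e : ℝ → ℝ)
    (he : e = fun τ => φ (𝓕 τ, θ τ, ξ τ) + θ τ * s τ)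
    (D Φ r : ℝ)
    (hbal : θ t * deriv s t + D = Φ + r) :
    deriv e t =
      fderiv ℝ φ (𝓕 t, θ t, ξ t) (deriv 𝓕 t, 0, 0)
        - D + r
        + fderiv ℝ φ (𝓕 t, θ t, ξ t) (0, 0, deriv ξ t)
        + Φ := by
  set p := (𝓕 t, θ t, ξ t)
  have hg : HasDerivAt (fun τ => (𝓕 τ, θ τ, ξ τ))
      (deriv 𝓕 t, deriv θ t, deriv ξ t) t :=
    HasDerivAt.prodMk h𝓕.hasDerivAt (HasDerivAt.prodMk hθ.hasDerivAt hξ.hasDerivAt)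
  have hcomp : HasDerivAt (fun τ => φ (𝓕 τ, θ τ, ξ τ))
      ((fderiv ℝ φ p) (deriv 𝓕 t, deriv θ t, deriv ξ t)) t :=
    ((hφ p).hasFDerivAt.comp_hasDerivAt t hg)
  have hθs : HasDerivAt (fun τ => θ τ * s τ)
      (deriv θ t * s t + θ t * deriv s t) t :=
    hθ.hasDerivAt.mul hsdiff.hasDerivAt
  have hE : HasDerivAt e
      ((fderiv ℝ φ p) (deriv 𝓕 t, deriv θ t, deriv ξ t)
        + (deriv θ t * s t + θ t * deriv s t)) t := by
    rw [he]; exact hcomp.add hθs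
  have hst : s t = -(fderiv ℝ φ p) (0, 1, 0) := by rw [hs]
  have hsplit : (fderiv ℝ φ p) (deriv 𝓕 t, deriv θ t, deriv ξ t)
      = (fderiv ℝ φ p) (deriv 𝓕 t, 0, 0)
        + deriv θ t * (fderiv ℝ φ p) (0, 1, 0)
        + (fderiv ℝ φ p) (0, 0, deriv ξ t) := by
    have : (deriv 𝓕 t, deriv θ t, deriv ξ t)
        = (deriv 𝓕 t, (0:ℝ), (0:F)) + deriv θ t • ((0:E), (1:ℝ), (0:F))
          + ((0:E), (0:ℝ), deriv ξ t) := by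
      simp [Prod.ext_iff]
    rw [this, map_add, map_add, map_smul]
    simp
  rw [hE.deriv, hsplit, hst]
  linarith
end

section
/- Let E and F be real finite-dimensional inner product spaces and φ : E × ℝ × F → ℝ be twice continuously differentiable (C²). Let paths 𝐅 : ℝ → E, θ : ℝ → ℝ, ξ : ℝ → F be differentiable at t, set p = (𝐅(t), θ(t), ξ(t)), define s(τ) := −(fderiv ℝ φ (𝐅(τ), θ(τ), ξ(τ))) (0, 1, 0), and let c := −θ(t)·D²φ(p)((0, 1, 0), (0, 1, 0)). Suppose the entropy balance θ(t)·s'(t) + D = Φ + r holds, where D, Φ, r ∈ ℝ are the pointwise values of the heat-flux divergence, total nonthermal channel power, and volumetric heating. Then the temperature equation holds: c·θ'(t) = −D + Φ + θ(t)·D²φ(p)((𝐅'(t), 0, 0), (0, 1, 0)) + θ(t)·D²φ(p)((0, 0, ξ'(t)), (0, 1, 0)) + r. (That is, c θ̇ = −Div q₀ + ∑Φ_α + θ ∂²_{θF}φ : Ḟ + θ ∂²_{θξ}φ · ξ̇ + r₀.) -/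
/-!
Differentiating the entropy `s = -∂_θ φ` along the path `τ ↦ (𝓕 τ, θ τ, ξ τ)` by the chain rule
gives `ṡ = -D²φ(p)(v, e_θ)` with `v = (𝓕̇, θ̇, ξ̇)`. Splitting `v` into its three components, the
`θ̇`-part contributes `-θ̇ ∂²_{θθ}φ`, which after multiplication by `θ` is `c θ̇`; the other two
parts are the reversible conversion terms, and the entropy balance becomes the temperature equation.
-/

theorem hasDerivAt_fderiv_apply_comp {𝕜 E G : Type*} [NontriviallyNormedField 𝕜]
    [NormedAddCommGroup E] [NormedSpace 𝕜 E] [NormedAddCommGroup G] [NormedSpace 𝕜 G]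
    {φ : E → G} {γ : 𝕜 → E} {t : 𝕜}
    (hφ : DifferentiableAt 𝕜 (fderiv 𝕜 φ) (γ t)) (hγ : DifferentiableAt 𝕜 γ t) (v : E) :
    HasDerivAt (fun τ => fderiv 𝕜 φ (γ τ) v) (fderiv 𝕜 (fderiv 𝕜 φ) (γ t) (deriv γ t) v) t := by
  simpa using (hφ.hasFDerivAt.comp_hasDerivAt t hγ.hasDerivAt).clm_apply (hasDerivAt_const t v)

theorem ContinuousLinearMap.map_prod_prod_eq_add {𝕜 E F G : Type*} [NontriviallyNormedField 𝕜]
    [NormedAddCommGroup E] [NormedSpace 𝕜 E] [NormedAddCommGroup F] [NormedSpace 𝕜 F]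
    [NormedAddCommGroup G] [NormedSpace 𝕜 G]
    (B : E × 𝕜 × F →L[𝕜] G) (a : E) (b : 𝕜) (c : F) :
    B (a, b, c) = B (a, 0, 0) + b • B (0, 1, 0) + B (0, 0, c) := by
  rw [← map_smul, ← map_add, ← map_add]
  simp

theorem temperature_equation_general
    {E F : Type*}
    [NormedAddCommGroup E] [InnerProductSpace ℝ E]
    [NormedAddCommGroup F] [InnerProductSpace ℝ F]
    (φ : E × ℝ × F → ℝ) (hφ : ContDiff ℝ 2 φ)
    (𝓕 : ℝ → E) (θ : ℝ → ℝ) (ξ : ℝ → F) (t : ℝ)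
    (h𝓕 : DifferentiableAt ℝ 𝓕 t) (hθ : DifferentiableAt ℝ θ t)
    (hξ : DifferentiableAt ℝ ξ t)
    (p : E × ℝ × F) (hp : p = (𝓕 t, θ t, ξ t))
    (s : ℝ → ℝ)
    (hs : s = fun τ => -(fderiv ℝ φ (𝓕 τ, θ τ, ξ τ)) (0, 1, 0))
    (c : ℝ)
    (hc : c = -θ t * (fderiv ℝ (fderiv ℝ φ) p (0, 1, 0)) (0, 1, 0))
    (D Φ r : ℝ)
    (hbal : θ t * deriv s t + D = Φ + r) :
    c * deriv θ t =
      -D + Φ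
        + θ t * (fderiv ℝ (fderiv ℝ φ) p (deriv 𝓕 t, 0, 0)) (0, 1, 0)
        + θ t * (fderiv ℝ (fderiv ℝ φ) p (0, 0, deriv ξ t)) (0, 1, 0)
        + r := by
  subst hp hs hc
  have hvel : HasDerivAt (fun τ => (𝓕 τ, θ τ, ξ τ)) (deriv 𝓕 t, deriv θ t, deriv ξ t) t :=
    h𝓕.hasDerivAt.prodMk (hθ.hasDerivAt.prodMk hξ.hasDerivAt)
  have hφ' : DifferentiableAt ℝ (fderiv ℝ φ) (𝓕 t, θ t, ξ t) :=
    (hφ.fderiv_right le_rfl).differentiable one_ne_zero _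
  have hentropy := (hasDerivAt_fderiv_apply_comp hφ' hvel.differentiableAt (0, 1, 0)).deriv
  rw [deriv.fun_neg, hentropy, hvel.deriv,
    ContinuousLinearMap.map_prod_prod_eq_add _ (deriv 𝓕 t)] at hbal
  simp only [add_apply, smul_apply, smul_eq_mul] at hbal
  linarith

/-- Temperature form of the heat equation:
With `φ` of class C², entropy `s τ := −Dφ(𝓕 τ, θ τ, ξ τ)(0,1,0)`, heat
capacity `c := −θ(t)·D²φ(p)((0,1,0),(0,1,0))`, and the entropy balance
`θ(t)·s'(t) + D = Φ + r`, the temperature equation holds: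
`c·θ'(t) = −D + Φ + θ(t)·D²φ(p)((𝓕'(t),0,0),(0,1,0))
            + θ(t)·D²φ(p)((0,0,ξ'(t)),(0,1,0)) + r`. -/
theorem temperature_equation
    {E F : Type*}
    [NormedAddCommGroup E] [InnerProductSpace ℝ E] [FiniteDimensional ℝ E]
    [NormedAddCommGroup F] [InnerProductSpace ℝ F] [FiniteDimensional ℝ F]
    (φ : E × ℝ × F → ℝ) (hφ : ContDiff ℝ 2 φ)
    (𝓕 : ℝ → E) (θ : ℝ → ℝ) (ξ : ℝ → F) (t : ℝ)
    (h𝓕 : DifferentiableAt ℝ 𝓕 t) (hθ : DifferentiableAt ℝ θ t)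
    (hξ : DifferentiableAt ℝ ξ t)
    (p : E × ℝ × F) (hp : p = (𝓕 t, θ t, ξ t))
    (s : ℝ → ℝ)
    (hs : s = fun τ => -(fderiv ℝ φ (𝓕 τ, θ τ, ξ τ)) (0, 1, 0))
    (c : ℝ)
    (hc : c = -θ t * (fderiv ℝ (fderiv ℝ φ) p (0, 1, 0)) (0, 1, 0))
    (D Φ r : ℝ)
    (hbal : θ t * deriv s t + D = Φ + r) :
    c * deriv θ t =
      -D + Φ
        + θ t * (fderiv ℝ (fderiv ℝ φ) p (deriv 𝓕 t, 0, 0)) (0, 1, 0)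
        + θ t * (fderiv ℝ (fderiv ℝ φ) p (0, 0, deriv ξ t)) (0, 1, 0)
        + r :=
  temperature_equation_general φ hφ 𝓕 θ ξ t h𝓕 hθ hξ p hp s hs c hc D Φ r hbal
end

section
/- Let n ≥ 1 and let a, b ∈ ℝⁿ with a ≤ b componentwise, defining the closed box [a, b] ⊆ ℝⁿ. Let f : ℝⁿ → ℝⁿ be continuous on [a, b] and differentiable on its interior, with each component fᵢ having partial derivatives, and suppose f has integrable divergence div f(x) = ∑ᵢ ∂fᵢ/∂xᵢ(x) on [a, b]. Let σ : ℝⁿ → ℝ be integrable on [a, b] and suppose σ(x) + div f(x) ≥ 0 for all x in the interior of [a, b]. Then ∫_{[a,b]} σ(x) dx ≥ −∑ᵢ ( ∫_{face xᵢ = bᵢ} fᵢ − ∫_{face xᵢ = aᵢ} fᵢ ), where the face integrals are over the corresponding (n−1)-dimensional faces of the box. (Global form of the entropy inequality: the rate of total entropy is bounded below by minus the boundary entropy flux.) -/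
open Set MeasureTheory

/-- Global form of the entropy inequality on a box:
Let `[a, b] ⊆ ℝⁿ` (with `n = m + 1 ≥ 1`) be a closed box, let the entropy flux
`f` be continuous on `[a, b]` and have derivative `f' x` at each interior
point `x`, with integrable divergence `div f x = ∑ i, f' x (eᵢ) i` on
`[a, b]`.  Let the entropy rate `σ` be integrable on `[a, b]` and satisfy the
local entropy inequality `σ x + div f x ≥ 0` on the interior.  Then
`∫_{[a,b]} σ ≥ −∑ i (∫_{xᵢ = bᵢ} fᵢ − ∫_{xᵢ = aᵢ} fᵢ)`. -/
theorem global_entropy_inequality {m : ℕ}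
    (a b : Fin (m + 1) → ℝ) (hle : a ≤ b)
    (f : (Fin (m + 1) → ℝ) → Fin (m + 1) → ℝ)
    (f' : (Fin (m + 1) → ℝ) → (Fin (m + 1) → ℝ) →L[ℝ] (Fin (m + 1) → ℝ))
    (Hc : ContinuousOn f (Icc a b))
    (Hd : ∀ x ∈ Set.pi univ fun i => Ioo (a i) (b i),
      HasFDerivAt f (f' x) x)
    (Hi : IntegrableOn (fun x => ∑ i, f' x (Pi.single i 1) i) (Icc a b))
    (σ : (Fin (m + 1) → ℝ) → ℝ)
    (Hσi : IntegrableOn σ (Icc a b))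
    (Hpos : ∀ x ∈ Set.pi univ fun i => Ioo (a i) (b i),
      0 ≤ σ x + ∑ i, f' x (Pi.single i 1) i) :
    (∫ x in Icc a b, σ x) ≥
      -∑ i : Fin (m + 1),
        ((∫ x in Icc (a ∘ Fin.succAbove i) (b ∘ Fin.succAbove i),
            f (Fin.insertNth i (b i) x) i) -
          ∫ x in Icc (a ∘ Fin.succAbove i) (b ∘ Fin.succAbove i),
            f (Fin.insertNth i (a i) x) i) := by
  have hdiv := MeasureTheory.integral_divergence_of_hasFDerivAt_off_countable a b
    hle f f' ∅ countable_empty Hc (fun x hx => Hd x hx.1) Hi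
  rw [ge_iff_le, ← hdiv, neg_le]
  have key : 0 ≤ ∫ x in Icc a b, (σ x + ∑ i, f' x (Pi.single i 1) i) := by
    rw [volume_pi, ← setIntegral_congr_set Measure.univ_pi_Ioo_ae_eq_Icc]
    refine setIntegral_nonneg (MeasurableSet.univ_pi fun i => measurableSet_Ioo) fun x hx => Hpos x hx
  have := integral_add Hσi Hi
  linarith [this ▸ key]
end
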